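/- Let k be a field of characteristic zero. Consider the quadruple of 4×4 matrices x₁ = E₁₃, x₂ = E₁₄, x₃ = E₂₃, x₄ = E₂₄, where E_{ab} denotes the matrix with a single 1 in row a, column b and zeros elsewhere. These matrices pairwise commute (indeed all pairwise products are zero), and the k-vector space of tuples (z₁, z₂, z₃, z₄) of 4×4 matrices over k satisfying xᵢ·zⱼ − zⱼ·xᵢ + zᵢ·xⱼ − xⱼ·zᵢ = 0 for all 1 ≤ i, j ≤ 4 has dimension exactly 24. (This tangent-space computation witnesses that the square-zero locus is an irreducible component of the variety of commuting quadruples of 4×4 matrices.) -/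

import Mathlib

/-- The Zariski tangent space to the scheme of commuting `n`-tuples of `d×d` matrices at
a commuting tuple `x`: the space of tuples `(z₁,…,zₙ)` with
`xᵢ·zⱼ − zⱼ·xᵢ + zᵢ·xⱼ − xⱼ·zᵢ = 0` for all `i, j`. -/
def commTangent (k : Type*) [Field k] {d n : ℕ}
    (x : Fin n → Matrix (Fin d) (Fin d) k) :
    Submodule k (Fin n → Matrix (Fin d) (Fin d) k) where
  carrier := {z | ∀ i j, x i * z j - z j * x i + z i * x j - x j * z i = 0}
  zero_mem' := by intro i j; simp
  add_mem' := by
    intro a b ha hb i j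
    have h : (x i * a j - a j * x i + a i * x j - x j * a i) +
        (x i * b j - b j * x i + b i * x j - x j * b i) = 0 := by
      rw [ha i j, hb i j, add_zero]
    calc x i * (a + b) j - (a + b) j * x i + (a + b) i * x j - x j * (a + b) i
        = (x i * a j - a j * x i + a i * x j - x j * a i) +
            (x i * b j - b j * x i + b i * x j - x j * b i) := by
          simp only [Pi.add_apply, mul_add, add_mul]; abel
      _ = 0 := h
  smul_mem' := by
    intro c z hz i j
    simp only [Pi.smul_apply, Matrix.mul_smul, Matrix.smul_mul, ← smul_sub, ← smul_add]
    rw [hz i j, smul_zero]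

/-- The commuting quadruple `x₁ = E₁₃`, `x₂ = E₁₄`, `x₃ = E₂₃`, `x₄ = E₂₄` of `4×4`
matrices (written with 0-based indices). -/
def sqZeroQuadruple (k : Type*) [Field k] : Fin 4 → Matrix (Fin 4) (Fin 4) k :=
  ![Matrix.single 0 2 1, Matrix.single 0 3 1,
    Matrix.single 1 2 1, Matrix.single 1 3 1]

/-!
Write `k⁴ = U ⊕ W` with `U = ⟨e₁, e₂⟩` and `W = ⟨e₃, e₄⟩`. The `xᵢ` form a basis of
`Hom(W, U)`, so all their products vanish, and three families of tangent vectors are visible: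
tuples of scalar matrices (4 dimensions), the infinitesimal conjugations `zⱼ = [xⱼ, m]` with
`m ∈ Hom(U, W) = span{xᵢᵀ}` (4 dimensions; they lie in the tangent space by the Jacobi identity),
and tuples with entries in `Hom(W, U) = span{xᵢ}` (16 dimensions). These span a subspace of
dimension 24. Conversely, the tangent equations are a linear system in the 64 entries of `z`, and
a solution whose 24 coordinates along the three families vanish is zero.
-/

open Matrix

section CommTangent

variable {k : Type*} [Field k] {d n : ℕ} {x : Fin n → Matrix (Fin d) (Fin d) k}

theorem smul_one_mem_commTangent (c : Fin n → k) : (fun j => c j • 1) ∈ commTangent k x := by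
  intro i j
  simp only [Matrix.mul_smul, Matrix.smul_mul, mul_one, one_mul]
  abel

theorem commutator_mem_commTangent (hx : ∀ i j, Commute (x i) (x j))
    (m : Matrix (Fin d) (Fin d) k) : (fun j => x j * m - m * x j) ∈ commTangent k x := by
  intro i j
  have jacobi : x i * (x j * m - m * x j) - (x j * m - m * x j) * x i + (x i * m - m * x i) * x j
      - x j * (x i * m - m * x i) = (x i * x j - x j * x i) * m - m * (x i * x j - x j * x i) := by
    noncomm_ring
  rw [jacobi, (hx i j).eq, sub_self, zero_mul, mul_zero, sub_zero]

theorem linearCombination_mem_commTangent (hx : ∀ i j, x i * x j = 0) (c : Fin n → Fin n → k) :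
    (fun j => ∑ l, c j l • x l) ∈ commTangent k x := by
  intro i j
  simp [Finset.mul_sum, Finset.sum_mul, hx]

variable (x) in
def commTangentParam :
    (Fin n → k) × (Fin n → k) × (Fin n → Fin n → k) →ₗ[k] (Fin n → Matrix (Fin d) (Fin d) k) where
  toFun p j := p.1 j • 1 + (x j * (∑ l, p.2.1 l • (x l)ᵀ) - (∑ l, p.2.1 l • (x l)ᵀ) * x j) +
    ∑ l, p.2.2 j l • x l
  map_add' p q := by
    ext j : 1
    simp only [Prod.fst_add, Prod.snd_add, Pi.add_apply, add_smul, Finset.sum_add_distrib,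
      mul_add, add_mul]
    abel
  map_smul' c p := by
    ext j : 1
    simp only [Prod.smul_fst, Prod.smul_snd, Pi.smul_apply, smul_eq_mul, mul_smul,
      ← Finset.smul_sum, Matrix.mul_smul, Matrix.smul_mul, RingHom.id_apply, smul_add, smul_sub]

theorem range_commTangentParam_le (hx : ∀ i j, x i * x j = 0) :
    LinearMap.range (commTangentParam x) ≤ commTangent k x := by
  rintro _ ⟨p, rfl⟩
  have hcomm : ∀ i j, Commute (x i) (x j) := fun i j => (hx i j).trans (hx j i).symm
  exact add_mem (add_mem (smul_one_mem_commTangent _) (commutator_mem_commTangent hcomm _))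
    (linearCombination_mem_commTangent hx _)

end CommTangent

theorem single_one_mul_apply {α : Type*} [NonAssocSemiring α] {l m n : Type*} [Fintype m]
    [DecidableEq l] [DecidableEq m] {a r : l} {b : m} {c : n} (M : Matrix m n α) :
    (single a b (1 : α) * M) r c = if r = a then M b c else 0 := by
  split_ifs with h
  · subst h; simp
  · exact single_mul_apply_of_ne _ _ _ _ _ h _

theorem mul_single_one_apply {α : Type*} [NonAssocSemiring α] {l m n : Type*} [Fintype m]
    [DecidableEq m] [DecidableEq n] {a : m} {b c : n} {r : l} (M : Matrix l m α) :
    (M * single a b (1 : α)) r c = if c = b then M r a else 0 := by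
  split_ifs with h
  · subst h; simp
  · exact mul_single_apply_of_ne _ _ _ _ _ h _

theorem mem_commTangent_single_iff {k : Type*} [Field k] {d n : ℕ} (a b : Fin n → Fin d)
    (z : Fin n → Matrix (Fin d) (Fin d) k) :
    z ∈ commTangent k (fun i => single (a i) (b i) 1) ↔ ∀ i j r c,
      (if r = a i then z j (b i) c else 0) - (if c = b i then z j r (a i) else 0) +
        (if c = b j then z i r (a j) else 0) - (if r = a j then z i (b j) c else 0) = 0 := by
  refine forall₂_congr fun i j => ?_
  simp only [← Matrix.ext_iff, Matrix.sub_apply, Matrix.add_apply, Matrix.zero_apply,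
    single_one_mul_apply, mul_single_one_apply]

section SqZeroQuadruple

variable {k : Type*} [Field k]

theorem sqZeroQuadruple_eq_single :
    sqZeroQuadruple k = fun i => single (![0, 0, 1, 1] i) (![2, 3, 2, 3] i) 1 := by
  ext i : 1; fin_cases i <;> rfl

theorem sqZeroQuadruple_mul_eq_zero (i j : Fin 4) :
    sqZeroQuadruple k i * sqZeroQuadruple k j = 0 := by
  have hcol_ne_row : ∀ a b : Fin 4, (![2, 3, 2, 3] : Fin 4 → Fin 4) a ≠ ![0, 0, 1, 1] b := by
    decide
  rw [sqZeroQuadruple_eq_single]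
  exact single_mul_single_of_ne _ _ _ _ (hcol_ne_row i j) _

/-- On `z = commTangentParam _ p`, the diagonal entry of `zⱼ` off the row of `xⱼ` is `p.1 j`,
the diagonal entry in that row exceeds it by `p.2.1 j`, and the `Hom(W, U)` block of `zⱼ` is
`p.2.2 j`. -/
def sqZeroTangentCoord :
    (Fin 4 → Matrix (Fin 4) (Fin 4) k) →ₗ[k] (Fin 4 → k) × (Fin 4 → k) × (Fin 4 → Fin 4 → k) where
  toFun z := (fun j => z j (![1, 1, 0, 0] j) (![1, 1, 0, 0] j),
    fun j => z j (![0, 0, 1, 1] j) (![0, 0, 1, 1] j) - z j (![1, 1, 0, 0] j) (![1, 1, 0, 0] j),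
    fun j l => z j (![0, 0, 1, 1] l) (![2, 3, 2, 3] l))
  map_add' z w := by
    ext <;> simp only [Pi.add_apply, Matrix.add_apply, Prod.fst_add, Prod.snd_add]
    ring
  map_smul' c z := by
    ext <;> simp only [Pi.smul_apply, Matrix.smul_apply, Prod.smul_fst, Prod.smul_snd,
      smul_eq_mul, RingHom.id_apply]
    ring

theorem sqZeroTangentCoord_commTangentParam
    (p : (Fin 4 → k) × (Fin 4 → k) × (Fin 4 → Fin 4 → k)) :
    sqZeroTangentCoord (commTangentParam (sqZeroQuadruple k) p) = p := by
  obtain ⟨s, t, c⟩ := p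
  simp only [sqZeroTangentCoord, commTangentParam, LinearMap.coe_mk, AddHom.coe_mk, Prod.mk.injEq]
  refine ⟨?_, ?_, ?_⟩
  · ext j; fin_cases j <;> simp [sqZeroQuadruple, Fin.sum_univ_four]
  · ext j; fin_cases j <;> simp [sqZeroQuadruple, Fin.sum_univ_four]
  · ext j l; fin_cases j <;> fin_cases l <;> simp [sqZeroQuadruple, Fin.sum_univ_four]

set_option maxHeartbeats 1000000 in
theorem eq_zero_of_sqZeroTangentCoord_eq_zero {z : Fin 4 → Matrix (Fin 4) (Fin 4) k}
    (hz : z ∈ commTangent k (sqZeroQuadruple k)) (hcoord : sqZeroTangentCoord z = 0) :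
    z = 0 := by
  rw [sqZeroQuadruple_eq_single, mem_commTangent_single_iff] at hz
  simp only [Fin.forall_fin_succ, Fin.isValue, Fin.succ_zero_eq_one, Fin.succ_one_eq_two,
    Fin.reduceSucc, IsEmpty.forall_iff, and_true, cons_val_zero, cons_val_succ, cons_val_fin_one,
    Fin.reduceEq, ↓reduceIte, one_ne_zero, zero_ne_one, add_zero, zero_add, sub_zero, zero_sub,
    sub_self, sub_add_cancel, neg_add_cancel, neg_eq_zero, and_self, true_and] at hz
  simp only [sqZeroTangentCoord, LinearMap.coe_mk, AddHom.coe_mk, Prod.ext_iff, Prod.fst_zero,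
    Prod.snd_zero, funext_iff, Pi.zero_apply, Fin.forall_fin_succ, Fin.isValue,
    Fin.succ_zero_eq_one, Fin.succ_one_eq_two, Fin.reduceSucc, cons_val_zero, cons_val_succ,
    cons_val_fin_one, IsEmpty.forall_iff, and_true, forall_const] at hcoord
  ext j r c
  revert j r c
  simp only [Pi.zero_apply, Matrix.zero_apply, Fin.forall_fin_succ, Fin.isValue,
    Fin.succ_zero_eq_one, Fin.succ_one_eq_two, Fin.reduceSucc, IsEmpty.forall_iff, and_true]
  -- each entry of `z` is a linear consequence of the entrywise tangent equations `hz` and `hcoord`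
  repeat' apply And.intro
  all_goals grind

theorem commTangent_sqZeroQuadruple_eq_range :
    commTangent k (sqZeroQuadruple k) = LinearMap.range (commTangentParam (sqZeroQuadruple k)) := by
  have hrange := range_commTangentParam_le (sqZeroQuadruple_mul_eq_zero (k := k))
  refine le_antisymm (fun z hz => ⟨sqZeroTangentCoord z, ?_⟩) hrange
  have hdiff := eq_zero_of_sqZeroTangentCoord_eq_zero (sub_mem hz (hrange ⟨_, rfl⟩))
    (by rw [map_sub, sqZeroTangentCoord_commTangentParam, sub_self])
  exact (sub_eq_zero.1 hdiff).symm

end SqZeroQuadruple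

theorem sqZeroQuadruple_commutes_and_tangent_dim_general (k : Type*) [Field k] :
    (∀ i j, sqZeroQuadruple k i * sqZeroQuadruple k j = 0) ∧
      (∀ i j, Commute (sqZeroQuadruple k i) (sqZeroQuadruple k j)) ∧
      Module.finrank k ↥(commTangent k (sqZeroQuadruple k)) = 24 := by
  refine ⟨sqZeroQuadruple_mul_eq_zero, fun i j =>
    (sqZeroQuadruple_mul_eq_zero i j).trans (sqZeroQuadruple_mul_eq_zero j i).symm, ?_⟩
  have hinj : Function.Injective (commTangentParam (sqZeroQuadruple k)) :=
    Function.LeftInverse.injective sqZeroTangentCoord_commTangentParam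
  rw [commTangent_sqZeroQuadruple_eq_range, LinearMap.finrank_range_of_inj hinj]
  simp [Module.finrank_pi_fintype]

/-- the quadruple `(E₁₃, E₁₄, E₂₃, E₂₄)` of `4×4` matrices has all pairwise
products zero (so it pairwise commutes), and the tangent space to the commuting variety
at it has dimension exactly `24`. -/
theorem sqZeroQuadruple_commutes_and_tangent_dim (k : Type*) [Field k] [CharZero k] :
    (∀ i j, sqZeroQuadruple k i * sqZeroQuadruple k j = 0) ∧
      (∀ i j, Commute (sqZeroQuadruple k i) (sqZeroQuadruple k j)) ∧
      Module.finrank k ↥(commTangent k (sqZeroQuadruple k)) = 24 :=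
  sqZeroQuadruple_commutes_and_tangent_dim_general k
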